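/- Let p > 1, G > 0 and E₀ > 0, and let (E_j) be a sequence of positive reals satisfying E_{j+1} ≥ G E_j^p / (2p)^j for all j ≥ 0. Then there exists a real constant q, depending only on p and G, such that E_j ≥ exp(p^j (log E₀ + q)) for all j ≥ 0. -/

import Mathlib

/-! Taking logarithms turns the hypothesis into the affine recursion
`log E_{j+1} ≥ p log E_j + log G - j log (2p)`, whose excess over the geometric growth
`p^j log E_0` is controlled by a constant depending only on `p`, `G` and `log (2p)`. -/

open MeasureTheory Metric Real Set

noncomputable section

/-- Euclidean 3-space. -/
abbrev E3 : Type := EuclideanSpace ℝ (Fin 3)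

/-- surface measure on the unit sphere of `ℝ³` -/
def sphMeasure : Measure (sphere (0 : E3) 1) := (volume : Measure E3).toSphere

/-- surface integral over the unit sphere -/
def sphInt (h : E3 → ℝ) : ℝ := ∫ ξ : sphere (0 : E3) 1, h (ξ : E3) ∂sphMeasure

/-- The Duhamel-type integral operator `L`. -/
def Lop (p : ℝ) (w : E3 → ℝ → ℝ) (x : E3) (t : ℝ) : ℝ :=
  (1 / (4 * π)) * ∫ s in (0:ℝ)..t,
    (t - s) * (1 + s) ^ (-(p - 1)) * sphInt (fun η => w (x + (t - s) • η) s)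

/-- Kirchhoff's solution of the free wave equation with data `(ε f, ε (f + g))`. -/
def kirch (ε : ℝ) (f g : E3 → ℝ) (x : E3) (t : ℝ) : ℝ :=
  ε * (t / (4 * π)) * sphInt (fun ξ => f (x + t • ξ) + g (x + t • ξ)) +
    ε * deriv (fun τ : ℝ => (τ / (4 * π)) * sphInt (fun ξ => f (x + τ • ξ))) t

/-- `γ(p,5) = 2 + 6p - 4p²` -/
def gam5 (p : ℝ) : ℝ := 2 + 6 * p - 4 * p ^ 2

/-- Strauss exponent `p_S(5)` -/
def pS5 : ℝ := (3 + Real.sqrt 17) / 4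

/-- the exponent `q` -/
def qexp (p : ℝ) : ℝ := max (2 * (p - 1)) 1

/-- the exponent `q̄` -/
def qbar (p : ℝ) : ℝ := max 0 (2 * p - 3)

/-- the weight `w(r,t)` -/
def wgt (p ρ r t : ℝ) : ℝ :=
  if p = 3 / 2 then
    ρ⁻¹ * (t + r + 2 * ρ) * (Real.log (2 * (t + r + 2 * ρ) / (t - r + 2 * ρ)))⁻¹
  else
    ρ ^ (-(2 * (p - 1))) * (t + r + 2 * ρ) ^ qexp p * (t - r + 2 * ρ) ^ qbar p

/-- the weighted `L^∞` norm on `ℝ³ × [0,T)` -/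
def wnorm (p ρ T : ℝ) (u : E3 → ℝ → ℝ) : ℝ :=
  sSup {y : ℝ | ∃ x : E3, ∃ t : ℝ, 0 ≤ t ∧ t < T ∧ y = wgt p ρ ‖x‖ t * |u x t|}

/-- the norm `‖u⁰‖₀` -/
def wnorm0 (ρ : ℝ) (u : E3 → ℝ → ℝ) : ℝ :=
  sSup {y : ℝ | ∃ x : E3, ∃ t : ℝ, 0 ≤ t ∧ y = ρ⁻¹ * (t + ‖x‖ + 2 * ρ) * |u x t|}

/-- the quantity `D(T)` -/
def DT (p ρ T : ℝ) : ℝ :=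
  if p < pS5 then ((2 * T + 3 * ρ) / ρ) ^ (gam5 p / 2)
  else if p = pS5 then Real.log ((T + 2 * ρ) / ρ)
  else 1

/-- spherical mean of a function on `ℝ³ × [0,T)` -/
def sphMean (v : E3 → ℝ → ℝ) (r t : ℝ) : ℝ :=
  (1 / (4 * π)) * sphInt (fun ξ => v (r • ξ) t)

/-- the region `R(r,t)` -/
def Rset (r t : ℝ) : Set (ℝ × ℝ) :=
  {q | t - r ≤ q.2 + q.1 ∧ q.2 + q.1 ≤ t + r ∧ q.2 - q.1 ≤ t - r ∧ 0 ≤ q.2}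

/-- `m(p)` -/
def mexp (p : ℝ) : ℕ := if p < 2 then 1 else 2

theorem pow_mul_le_of_mul_le_succ {R : Type*} [Semiring R] [PartialOrder R] [IsOrderedRing R]
    {p : R} (hp : 0 ≤ p) {b : ℕ → R} (h : ∀ j, p * b j ≤ b (j + 1)) (j : ℕ) :
    p ^ j * b 0 ≤ b j := by
  induction j with
  | zero => simp
  | succ j ih =>
    calc p ^ (j + 1) * b 0 = p * (p ^ j * b 0) := by rw [pow_succ', mul_assoc]
      _ ≤ p * b j := mul_le_mul_of_nonneg_left ih hp
      _ ≤ b (j + 1) := h j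

/- The shift `b j = a j - α j - β`, with `α (p - 1) = L` and `β (p - 1) = α - c`, turns the
affine recursion into `p b j ≤ b (j + 1)`. -/
theorem exists_pow_mul_le_of_affine_recursion {p : ℝ} (hp : 1 < p) (c : ℝ) {L : ℝ}
    (hL : 0 ≤ L) :
    ∃ q : ℝ, ∀ a : ℕ → ℝ, (∀ j : ℕ, p * a j + c - j * L ≤ a (j + 1)) →
      ∀ j : ℕ, p ^ j * (a 0 + q) ≤ a j := by
  have hp1 : p - 1 ≠ 0 := by linarith
  set α := L / (p - 1)
  set β := (α - c) / (p - 1)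
  have hα : α * (p - 1) = L := div_mul_cancel₀ L hp1
  have hβ : β * (p - 1) = α - c := div_mul_cancel₀ _ hp1
  refine ⟨-max β 0, fun a ha j => ?_⟩
  have hshift := pow_mul_le_of_mul_le_succ (p := p) (b := fun j => a j - α * j - β) (by linarith)
    (fun j => by push_cast; linear_combination ha j - (j : ℝ) * hα - hβ) j
  have hαj : 0 ≤ α * j := mul_nonneg (div_nonneg hL (by linarith)) j.cast_nonneg
  have hpj : 1 ≤ p ^ j := one_le_pow₀ hp.le
  simp only [CharP.cast_eq_zero, mul_zero, sub_zero] at hshift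
  rcases le_total β 0 with hβ0 | hβ0
  · rw [max_eq_right hβ0]; nlinarith
  · rw [max_eq_left hβ0]; nlinarith

theorem log_succ_ge_of_iteration_inequality {p G : ℝ} (hp : 0 < p) (hG : 0 < G)
    {E : ℕ → ℝ} (hE : ∀ j, 0 < E j)
    (hrec : ∀ j : ℕ, G * E j ^ p / (2 * p) ^ (j : ℝ) ≤ E (j + 1)) (j : ℕ) :
    p * Real.log (E j) + Real.log G - j * Real.log (2 * p) ≤ Real.log (E (j + 1)) := by
  have hEp : 0 < E j ^ p := Real.rpow_pos_of_pos (hE j) p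
  have h2p : 0 < (2 * p) ^ (j : ℝ) := Real.rpow_pos_of_pos (by linarith) _
  have hlog := Real.log_le_log (div_pos (mul_pos hG hEp) h2p) (hrec j)
  rw [Real.log_div (mul_pos hG hEp).ne' h2p.ne', Real.log_mul hG.ne' hEp.ne',
    Real.log_rpow (hE j), Real.log_rpow (by linarith : 0 < 2 * p)] at hlog
  linarith

/-- sequences satisfying `E_{j+1} ≥ G E_j^p / (2p)^j` obey the
doubly exponential lower bound `E_j ≥ exp(p^j (log E₀ + q))` for a constant `q`
depending only on `p` and `G`. -/
theorem iteration_sequence_lower_bound' (p G : ℝ) (hp : 1 < p) (hG : 0 < G) :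
    ∃ q : ℝ, ∀ E : ℕ → ℝ, (∀ j, 0 < E j) →
      (∀ j : ℕ, G * E j ^ p / (2 * p) ^ (j : ℝ) ≤ E (j + 1)) →
      ∀ j : ℕ, Real.exp (p ^ (j : ℝ) * (Real.log (E 0) + q)) ≤ E j := by
  obtain ⟨q, hq⟩ := exists_pow_mul_le_of_affine_recursion hp (Real.log G)
    (Real.log_nonneg (by linarith : (1 : ℝ) ≤ 2 * p))
  refine ⟨q, fun E hE hrec j => ?_⟩
  rw [Real.rpow_natCast, ← Real.exp_log (hE j), Real.exp_le_exp]
  exact hq (fun j => Real.log (E j))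
    (log_succ_ge_of_iteration_inequality (by linarith) hG hE hrec) j
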